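/- arXiv:2306.01654 — 3 statements merged into one kernel-verified Lean document; each statement's English description precedes it below -/
import Mathlib

section
/- Let n ≥ 1, let κ : ℝⁿ → ℝ be continuously differentiable with κ and ∇κ bounded, and let p_d, p : ℝⁿ → ℝ be continuously differentiable, strictly positive, with p, p_d, ‖∇p‖ and ‖∇p_d‖ Lebesgue integrable. Then for every x ∈ ℝⁿ: ((p_d − p) * ∇κ)(x) = ∫_{ℝⁿ} p_d(y) ∇(ln p_d)(y) κ(x−y) dy − ∫_{ℝⁿ} p(y) ∇(ln p)(y) κ(x−y) dy, where the convolution of the scalar function p_d − p with the vector field ∇κ is taken entrywise. Consequently, the smoothed score-matching condition ∫ p(y)∇(ln p)(y)κ(x−y)dy = ∫ p_d(y)∇(ln p_d)(y)κ(x−y)dy holds at a point x if and only if ((p_d − p) * ∇κ)(x) = 0. -/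
/-!
Multiplying the score `∇ log q = ∇q / q` by `q` leaves `∇q`, so each smoothed score is
`∫ κ(x - y) ∇q(y) dy`. Integration by parts over the whole space turns this into
`∫ q(y) ∇κ(x - y) dy`; there are no boundary terms because `q` and `∇q` are integrable while `κ`
and `∇κ` are bounded. Subtracting the cases `q = pd` and `q = p` gives the identity.
-/

open MeasureTheory
open scoped RealInnerProductSpace

theorem gradient_log_comp {F : Type*} [NormedAddCommGroup F] [InnerProductSpace ℝ F]
    [CompleteSpace F] {f : F → ℝ} {y : F} (hf : DifferentiableAt ℝ f y) (hy : f y ≠ 0) :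
    gradient (fun w => Real.log (f w)) y = (f y)⁻¹ • gradient f y := by
  simp only [gradient, fderiv.log hf hy, map_smul]

theorem mul_smul_gradient_log_comp {F : Type*} [NormedAddCommGroup F] [InnerProductSpace ℝ F]
    [CompleteSpace F] {f : F → ℝ} {y : F} (hf : DifferentiableAt ℝ f y) (hy : f y ≠ 0) (c : ℝ) :
    (f y * c) • gradient (fun w => Real.log (f w)) y = c • gradient f y := by
  rw [gradient_log_comp hf hy, smul_smul, mul_right_comm, mul_inv_cancel₀ hy, one_mul]

theorem fderiv_comp_const_sub_apply {𝕜 E F : Type*} [NontriviallyNormedField 𝕜]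
    [NormedAddCommGroup E] [NormedSpace 𝕜 E] [NormedAddCommGroup F] [NormedSpace 𝕜 F]
    {κ : E → F} {x y : E} (hκ : DifferentiableAt 𝕜 κ (x - y)) (v : E) :
    fderiv 𝕜 (fun y => κ (x - y)) y v = -fderiv 𝕜 κ (x - y) v := by
  have h : HasFDerivAt (fun y => κ (x - y))
      ((fderiv 𝕜 κ (x - y)).comp (-ContinuousLinearMap.id 𝕜 E)) y :=
    hκ.hasFDerivAt.comp y ((hasFDerivAt_id y).const_sub x)
  simp [h.fderiv]

section ReflectedKernel

variable {E : Type*} [NormedAddCommGroup E] [InnerProductSpace ℝ E] [FiniteDimensional ℝ E]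
  [MeasurableSpace E] [BorelSpace E] {μ : Measure E} {f κ : E → ℝ} {M M' : ℝ}

theorem measurable_gradient : Measurable (gradient f) :=
  (InnerProductSpace.toDual ℝ E).symm.continuous.measurable.comp (measurable_fderiv ℝ f)

theorem MeasureTheory.Integrable.smul_gradient_comp_const_sub (hfi : Integrable f μ)
    (hκ'b : ∀ z, ‖gradient κ z‖ ≤ M') (x : E) :
    Integrable (fun y => f y • gradient κ (x - y)) μ :=
  hfi.smul_bdd M'
    (measurable_gradient.comp (measurable_const.sub measurable_id)).aestronglyMeasurable
    (Filter.Eventually.of_forall fun _ => hκ'b _)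

theorem MeasureTheory.Integrable.comp_const_sub_smul_gradient
    (hf'i : Integrable (fun y => ‖gradient f y‖) μ) (hκ : Continuous κ) (hκb : ∀ z, |κ z| ≤ M)
    (x : E) :
    Integrable (fun y => κ (x - y) • gradient f y) μ :=
  ((integrable_norm_iff measurable_gradient.aestronglyMeasurable).1 hf'i).bdd_smul M
    (hκ.comp (continuous_const.sub continuous_id)).aestronglyMeasurable
    (Filter.Eventually.of_forall fun _ => hκb _)

theorem integral_smul_gradient_comp_const_sub [μ.IsAddHaarMeasure] (hf : Differentiable ℝ f)
    (hκ : Differentiable ℝ κ) (hfi : Integrable f μ)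
    (hf'i : Integrable (fun y => ‖gradient f y‖) μ) (hκb : ∀ z, |κ z| ≤ M)
    (hκ'b : ∀ z, ‖gradient κ z‖ ≤ M') (x : E) :
    ∫ y, f y • gradient κ (x - y) ∂μ = ∫ y, κ (x - y) • gradient f y ∂μ := by
  have hκx : Differentiable ℝ fun y => κ (x - y) :=
    hκ.comp ((differentiable_const x).sub differentiable_id)
  have I₁ := hfi.smul_gradient_comp_const_sub hκ'b x
  have I₂ := hf'i.comp_const_sub_smul_gradient hκ.continuous hκb x
  refine ext_inner_right ℝ fun v => ?_
  have hinner₁ (y : E) :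
      ⟪v, f y • gradient κ (x - y)⟫ = -(f y * fderiv ℝ (fun y => κ (x - y)) y v) := by
    rw [inner_smul_right, real_inner_comm, inner_gradient_left,
      fderiv_comp_const_sub_apply (hκ _), mul_neg, neg_neg]
  have hinner₂ (y : E) : ⟪v, κ (x - y) • gradient f y⟫ = fderiv ℝ f y v * κ (x - y) := by
    rw [inner_smul_right, real_inner_comm, inner_gradient_left, mul_comm]
  have ibp := integral_mul_fderiv_eq_neg_fderiv_mul_of_integrable (μ := μ) (v := v)
    ((I₂.const_inner v).congr (Filter.Eventually.of_forall hinner₂))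
    ((I₁.const_inner v).neg.congr
      (Filter.Eventually.of_forall fun y => by simp only [Pi.neg_apply, hinner₁, neg_neg]))
    (hfi.mul_bdd hκx.continuous.aestronglyMeasurable (Filter.Eventually.of_forall fun _ => hκb _))
    (fun y _ => hf y) (fun y _ => hκx y)
  rw [real_inner_comm, ← integral_inner I₁, real_inner_comm, ← integral_inner I₂]
  simp only [hinner₁, hinner₂, integral_neg, ibp, neg_neg]

end ReflectedKernel

theorem ipm_kernel_gradient_identity_general
    (n : ℕ)
    (κ : EuclideanSpace ℝ (Fin n) → ℝ) (hκ : ContDiff ℝ 1 κ)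
    (hκ_bdd : ∃ M : ℝ, ∀ x, |κ x| ≤ M)
    (hκ_grad_bdd : ∃ M : ℝ, ∀ x, ‖gradient κ x‖ ≤ M)
    (pd p : EuclideanSpace ℝ (Fin n) → ℝ)
    (hpd_smooth : ContDiff ℝ 1 pd) (hp_smooth : ContDiff ℝ 1 p)
    (hpd_pos : ∀ x, 0 < pd x) (hp_pos : ∀ x, 0 < p x)
    (hp_int : Integrable p) (hpd_int : Integrable pd)
    (hp_grad_int : Integrable fun y => ‖gradient p y‖)
    (hpd_grad_int : Integrable fun y => ‖gradient pd y‖) :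
    ∀ x : EuclideanSpace ℝ (Fin n),
      (∫ y, (pd y - p y) • gradient κ (x - y)) =
        (∫ y, (pd y * κ (x - y)) • gradient (fun w => Real.log (pd w)) y) -
          (∫ y, (p y * κ (x - y)) • gradient (fun w => Real.log (p w)) y) ∧
      ((∫ y, (p y * κ (x - y)) • gradient (fun w => Real.log (p w)) y) =
          (∫ y, (pd y * κ (x - y)) • gradient (fun w => Real.log (pd w)) y) ↔
        (∫ y, (pd y - p y) • gradient κ (x - y)) = 0) := by
  obtain ⟨M, hκb⟩ := hκ_bdd
  obtain ⟨M', hκ'b⟩ := hκ_grad_bdd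
  intro x
  have smoothed_score {q : EuclideanSpace ℝ (Fin n) → ℝ} (hq : ContDiff ℝ 1 q)
      (hq_pos : ∀ y, 0 < q y) (hq_int : Integrable q)
      (hq_grad_int : Integrable fun y => ‖gradient q y‖) :
      ∫ y, (q y * κ (x - y)) • gradient (fun w => Real.log (q w)) y =
        ∫ y, q y • gradient κ (x - y) := by
    simp only [mul_smul_gradient_log_comp (hq.differentiable one_ne_zero _) (hq_pos _).ne']
    exact (integral_smul_gradient_comp_const_sub (hq.differentiable one_ne_zero)
      (hκ.differentiable one_ne_zero) hq_int hq_grad_int hκb hκ'b x).symm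
  have identity : ∫ y, (pd y - p y) • gradient κ (x - y) =
      (∫ y, (pd y * κ (x - y)) • gradient (fun w => Real.log (pd w)) y) -
        ∫ y, (p y * κ (x - y)) • gradient (fun w => Real.log (p w)) y := by
    rw [smoothed_score hpd_smooth hpd_pos hpd_int hpd_grad_int,
      smoothed_score hp_smooth hp_pos hp_int hp_grad_int]
    simp only [sub_smul]
    exact integral_sub (hpd_int.smul_gradient_comp_const_sub hκ'b x)
      (hp_int.smul_gradient_comp_const_sub hκ'b x)
  rw [identity, sub_eq_zero]
  exact ⟨rfl, eq_comm⟩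

/-- **Kernel-gradient form of the smoothed score-matching condition.**
The entrywise convolution of `p_d − p` with `∇κ` equals the difference of the
kernel-smoothed scores, and hence the smoothed score-matching condition holds at a
point `x` if and only if `((p_d − p) * ∇κ)(x) = 0`. -/
theorem ipm_kernel_gradient_identity
    (n : ℕ) (hn : 1 ≤ n)
    (κ : EuclideanSpace ℝ (Fin n) → ℝ) (hκ : ContDiff ℝ 1 κ)
    (hκ_bdd : ∃ M : ℝ, ∀ x, |κ x| ≤ M)
    (hκ_grad_bdd : ∃ M : ℝ, ∀ x, ‖gradient κ x‖ ≤ M)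
    (pd p : EuclideanSpace ℝ (Fin n) → ℝ)
    (hpd_smooth : ContDiff ℝ 1 pd) (hp_smooth : ContDiff ℝ 1 p)
    (hpd_pos : ∀ x, 0 < pd x) (hp_pos : ∀ x, 0 < p x)
    (hp_int : Integrable p) (hpd_int : Integrable pd)
    (hp_grad_int : Integrable fun y => ‖gradient p y‖)
    (hpd_grad_int : Integrable fun y => ‖gradient pd y‖) :
    ∀ x : EuclideanSpace ℝ (Fin n),
      (∫ y, (pd y - p y) • gradient κ (x - y)) =
        (∫ y, (pd y * κ (x - y)) • gradient (fun w => Real.log (pd w)) y) -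
          (∫ y, (p y * κ (x - y)) • gradient (fun w => Real.log (p w)) y) ∧
      ((∫ y, (p y * κ (x - y)) • gradient (fun w => Real.log (p w)) y) =
          (∫ y, (pd y * κ (x - y)) • gradient (fun w => Real.log (pd w)) y) ↔
        (∫ y, (pd y - p y) • gradient κ (x - y)) = 0) :=
  ipm_kernel_gradient_identity_general n κ hκ hκ_bdd hκ_grad_bdd pd p hpd_smooth hp_smooth hpd_pos
    hp_pos hp_int hpd_int hp_grad_int hpd_grad_int
end

section
/- Let G : ℝⁿ → ℝⁿ be a twice continuously differentiable bijection whose Jacobian matrix J_G(z) satisfies det J_G(z) ≠ 0 for every z ∈ ℝⁿ. Let φ(z) = (2π)^{−n/2} exp(−‖z‖²/2) be the standard Gaussian density, and define the push-forward density p_t : ℝⁿ → ℝ by p_t(x) = φ(G⁻¹(x)) · |det J_G(G⁻¹(x))|⁻¹. Then for every z ∈ ℝⁿ, the function x ↦ ln p_t(x) is differentiable at G(z) and ∇(ln p_t)(G(z)) = −(J_G(z)ᵀ)⁻¹ ( ∇_z ln|det J_G(z)| + z ). -/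
/-!
Since `p_t = (φ / |det J_G|) ∘ G⁻¹`, the score is the gradient of `ln φ - ln |det J_G|`, which is
`-z - ∇ ln |det J_G|(z)` at `z`, pulled back along `G⁻¹`. By the inverse function theorem `G⁻¹` is
differentiable at `G z` with derivative `J_G(z)⁻¹`, and the chain rule for gradients applies the
transpose `(J_G(z)⁻¹)ᵀ = (J_G(z)ᵀ)⁻¹` of this derivative.
-/

open Function Matrix Real

section Euclidean

variable {ι : Type*} [Fintype ι] [DecidableEq ι]

theorem toEuclideanCLM_eq_of_apply_single {𝕜 : Type*} [RCLike 𝕜]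
    (L : EuclideanSpace 𝕜 ι →L[𝕜] EuclideanSpace 𝕜 ι) {A : Matrix ι ι 𝕜}
    (hA : ∀ j k, A j k = L (EuclideanSpace.single k 1) j) :
    toEuclideanCLM (n := ι) (𝕜 := 𝕜) A = L := by
  refine ContinuousLinearMap.coe_injective <|
    (EuclideanSpace.basisFun ι 𝕜).toBasis.ext fun k => ?_
  ext j
  simp [hA, EuclideanSpace.single]

theorem contDiff_det_of_contDiff_entries {𝕜 E : Type*} [RCLike 𝕜] [NormedAddCommGroup E]
    [NormedSpace 𝕜 E] {n : WithTop ℕ∞} {A : E → Matrix ι ι 𝕜}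
    (hA : ∀ i j, ContDiff 𝕜 n fun x => A x i j) :
    ContDiff 𝕜 n fun x => (A x).det := by
  simp_rw [det_apply]
  fun_prop

theorem HasStrictFDerivAt.hasStrictFDerivAt_invFun_of_isUnit_det {𝕜 : Type*} [RCLike 𝕜]
    {f : EuclideanSpace 𝕜 ι → EuclideanSpace 𝕜 ι} {A : Matrix ι ι 𝕜} {a : EuclideanSpace 𝕜 ι}
    (hf : HasStrictFDerivAt f (toEuclideanCLM (n := ι) (𝕜 := 𝕜) A) a) (hA : IsUnit A.det)
    (hinj : Injective f) :
    HasStrictFDerivAt (invFun f) (toEuclideanCLM (n := ι) (𝕜 := 𝕜) A⁻¹) (f a) := by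
  let e := ContinuousLinearEquiv.equivOfInverse' (toEuclideanCLM (n := ι) (𝕜 := 𝕜) A)
    (toEuclideanCLM (n := ι) (𝕜 := 𝕜) A⁻¹)
    (by rw [← ContinuousLinearMap.mul_def, ← map_mul, mul_nonsing_inv _ hA, map_one]; rfl)
    (by rw [← ContinuousLinearMap.mul_def, ← map_mul, nonsing_inv_mul _ hA, map_one]; rfl)
  exact HasStrictFDerivAt.to_local_left_inverse (f' := e) hf
    (Filter.Eventually.of_forall (leftInverse_invFun hinj))

theorem HasGradientAt.comp_toEuclideanCLM {h : EuclideanSpace ℝ ι → ℝ}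
    {g : EuclideanSpace ℝ ι} {H : EuclideanSpace ℝ ι → EuclideanSpace ℝ ι} {A : Matrix ι ι ℝ}
    {y : EuclideanSpace ℝ ι} (hh : HasGradientAt h g (H y))
    (hH : HasFDerivAt H (toEuclideanCLM (n := ι) (𝕜 := ℝ) A) y) :
    HasGradientAt (h ∘ H) (WithLp.toLp 2 (Aᵀ *ᵥ g)) y := by
  rw [hasGradientAt_iff_hasFDerivAt] at hh ⊢
  refine (hh.comp y hH).congr_fderiv ?_
  ext v
  simp only [ContinuousLinearMap.comp_apply, InnerProductSpace.toDual_apply_apply,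
    EuclideanSpace.inner_eq_star_dotProduct, ofLp_toEuclideanCLM, star_trivial,
    mulVec_transpose, dotProduct_mulVec, dotProduct_comm]

end Euclidean

section Gradient

variable {F : Type*} [NormedAddCommGroup F] [InnerProductSpace ℝ F] [CompleteSpace F]

theorem HasGradientAt.sub {f g : F → ℝ} {f' g' x : F} (hf : HasGradientAt f f' x)
    (hg : HasGradientAt g g' x) : HasGradientAt (fun x => f x - g x) (f' - g') x := by
  rw [hasGradientAt_iff_hasFDerivAt] at hf hg ⊢
  rw [map_sub]
  exact hf.sub hg

theorem hasGradientAt_log_mul_exp_neg_norm_sq_div_two {c : ℝ} (hc : 0 < c) (z : F) :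
    HasGradientAt (fun w => log (c * exp (-‖w‖ ^ 2 / 2))) (-z) z := by
  have h : (fun w : F => log (c * exp (-‖w‖ ^ 2 / 2))) = fun w => log c - ‖w‖ ^ 2 * 2⁻¹ := by
    funext w
    rw [log_mul hc.ne' (exp_ne_zero _), log_exp]
    ring
  rw [h, hasGradientAt_iff_hasFDerivAt]
  refine (((hasStrictFDerivAt_norm_sq z).hasFDerivAt.mul_const (2⁻¹ : ℝ)).const_sub
    (log c)).congr_fderiv ?_
  ext v
  simp

end Gradient

theorem DifferentiableAt.log_abs {E : Type*} [NormedAddCommGroup E] [NormedSpace ℝ E]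
    {f : E → ℝ} {x : E} (hf : DifferentiableAt ℝ f x) (hx : f x ≠ 0) :
    DifferentiableAt ℝ (fun x => Real.log |f x|) x := by
  simp_rw [Real.log_abs]
  exact hf.log hx

theorem generator_score_gaussian_general
    (n : ℕ)
    (G : EuclideanSpace ℝ (Fin n) → EuclideanSpace ℝ (Fin n))
    (hG : ContDiff ℝ 2 G) (hGbij : Function.Bijective G)
    (J : EuclideanSpace ℝ (Fin n) → Matrix (Fin n) (Fin n) ℝ)
    (hJ : ∀ z j k, J z j k = fderiv ℝ G z (EuclideanSpace.single k (1 : ℝ)) j)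
    (hJdet : ∀ z, (J z).det ≠ 0)
    (φ : EuclideanSpace ℝ (Fin n) → ℝ)
    (hφ : ∀ z, φ z = (2 * Real.pi) ^ (-(n : ℝ) / 2) * Real.exp (-‖z‖ ^ 2 / 2))
    (pt : EuclideanSpace ℝ (Fin n) → ℝ)
    (hpt : ∀ x, pt x =
      φ (Function.invFun G x) * |(J (Function.invFun G x)).det|⁻¹) :
    ∀ z, DifferentiableAt ℝ (fun x => Real.log (pt x)) (G z) ∧
      gradient (fun x => Real.log (pt x)) (G z) =
        -(((J z)ᵀ)⁻¹.mulVec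
          (gradient (fun w => Real.log |(J w).det|) z + z)) := by
  intro z
  have hfderiv : fderiv ℝ G z = toEuclideanCLM (n := Fin n) (𝕜 := ℝ) (J z) :=
    (toEuclideanCLM_eq_of_apply_single _ (hJ z)).symm
  have hinv : HasFDerivAt (invFun G) (toEuclideanCLM (n := Fin n) (𝕜 := ℝ) (J z)⁻¹) (G z) := by
    refine (HasStrictFDerivAt.hasStrictFDerivAt_invFun_of_isUnit_det ?_
      (isUnit_iff_ne_zero.mpr (hJdet z)) hGbij.injective).hasFDerivAt
    exact hfderiv ▸ hG.contDiffAt.hasStrictFDerivAt two_ne_zero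
  have hdet : ContDiff ℝ 1 fun w => (J w).det := by
    refine contDiff_det_of_contDiff_entries fun j k => ?_
    simp_rw [hJ]
    exact (EuclideanSpace.proj j).contDiff.comp
      ((hG.fderiv_right one_add_one_eq_two.le).clm_apply contDiff_const)
  have hlogdet := ((hdet.differentiable one_ne_zero z).log_abs (hJdet z)).hasGradientAt
  have hlogφ : HasGradientAt (fun w => log (φ w)) (-z) z := by
    simp_rw [hφ]
    exact hasGradientAt_log_mul_exp_neg_norm_sq_div_two (by positivity) z
  have hlogpt : (fun x => log (pt x)) =
      (fun w => log (φ w) - log |(J w).det|) ∘ invFun G := by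
    funext x
    rw [Function.comp_apply, hpt, log_mul _ (by simpa using hJdet _), log_inv]
    · ring
    · rw [hφ]; positivity
  have hlogratio : HasGradientAt (fun w => log (φ w) - log |(J w).det|)
      (-z - gradient (fun w => log |(J w).det|) z) (invFun G (G z)) := by
    rw [leftInverse_invFun hGbij.injective z]
    exact hlogφ.sub hlogdet
  have hscore := hlogratio.comp_toEuclideanCLM hinv
  rw [← hlogpt] at hscore
  refine ⟨hscore.differentiableAt, ?_⟩
  rw [hscore.gradient, transpose_nonsing_inv, WithLp.ofLp_toLp, ← mulVec_neg, WithLp.ofLp_sub,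
    WithLp.ofLp_neg, neg_add_rev, sub_eq_add_neg]

/-- **Score of the push-forward of a standard Gaussian under an invertible generator.**
If `G` is a `C²` bijection with everywhere nonsingular Jacobian `J_G`, and
`p_t(x) = φ(G⁻¹(x))·|det J_G(G⁻¹(x))|⁻¹` is the change-of-variables density of the
push-forward of the standard Gaussian `φ` under `G`, then
`∇ ln p_t (G(z)) = −(J_G(z)ᵀ)⁻¹ (∇_z ln|det J_G(z)| + z)`. -/
theorem generator_score_gaussian
    (n : ℕ) (hn : 1 ≤ n)
    (G : EuclideanSpace ℝ (Fin n) → EuclideanSpace ℝ (Fin n))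
    (hG : ContDiff ℝ 2 G) (hGbij : Function.Bijective G)
    (J : EuclideanSpace ℝ (Fin n) → Matrix (Fin n) (Fin n) ℝ)
    (hJ : ∀ z j k, J z j k = fderiv ℝ G z (EuclideanSpace.single k (1 : ℝ)) j)
    (hJdet : ∀ z, (J z).det ≠ 0)
    (φ : EuclideanSpace ℝ (Fin n) → ℝ)
    (hφ : ∀ z, φ z = (2 * Real.pi) ^ (-(n : ℝ) / 2) * Real.exp (-‖z‖ ^ 2 / 2))
    (pt : EuclideanSpace ℝ (Fin n) → ℝ)
    (hpt : ∀ x, pt x =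
      φ (Function.invFun G x) * |(J (Function.invFun G x)).det|⁻¹) :
    ∀ z, DifferentiableAt ℝ (fun x => Real.log (pt x)) (G z) ∧
      gradient (fun x => Real.log (pt x)) (G z) =
        -(((J z)ᵀ)⁻¹.mulVec
          (gradient (fun w => Real.log |(J w).det|) z + z)) :=
  generator_score_gaussian_general n G hG hGbij J hJ hJdet φ hφ pt hpt
end

section
/- Let g(D) = −e^{−D} and let f^c(T) = −1 − ln(−T) for T < 0 (the reverse Kullback–Leibler f-GAN parametrization; note g(D) < 0 for all D). For every y ∈ ℝ, D̃(y) = y is the unique real number D satisfying (f^c)'(g(D)) = e^y; and for every r > 0, the coefficient 𝒞 = r · g'(D̃(ln r)) · D̃'(ln r) equals 1. Hence for the reverse-KL GAN the optimal-generator condition reduces to exact score matching ∇ ln p_{t-1} = ∇ ln p_d. -/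
/-!
With `g(D) = −e^{−D}` and `f^c(T) = −1 − ln(−T)` one has `(f^c)'(T) = −1/T` on `T < 0`,
so `(f^c)'(g(D)) = e^D`, and injectivity of `exp` pins the optimal discriminator to
`D̃(y) = y`. Then `g'(D) = e^{−D}` gives `𝒞 = r · e^{−ln r} · 1 = 1`, and since
`ln (p_d / p) = ln p_d − ln p` near any point, a vanishing gradient of `ln r` is exactly
equality of the two scores.
-/

open Real Filter Topology

theorem hasDerivAt_neg_exp_neg (d : ℝ) :
    HasDerivAt (fun d : ℝ => -exp (-d)) (exp (-d)) d :=
  (hasDerivAt_neg d).exp.fun_neg.congr_deriv (by ring)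

theorem hasDerivAt_neg_one_sub_log_neg {T : ℝ} (hT : T < 0) :
    HasDerivAt (fun T : ℝ => -1 - log (-T)) (-T⁻¹) T :=
  ((hasDerivAt_neg T).log (neg_ne_zero.mpr hT.ne)).const_sub (-1) |>.congr_deriv (by field_simp)

theorem deriv_neg_one_sub_log_neg_at_neg_exp_neg (D : ℝ) :
    deriv (fun T : ℝ => -1 - log (-T)) (-exp (-D)) = exp D := by
  rw [(hasDerivAt_neg_one_sub_log_neg (neg_neg_of_pos (exp_pos (-D)))).deriv, inv_neg, neg_neg,
    ← exp_neg, neg_neg]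

theorem gradient_log_div {E : Type*} [NormedAddCommGroup E] [InnerProductSpace ℝ E]
    [CompleteSpace E] {f g : E → ℝ} {x : E} (hf : DifferentiableAt ℝ f x)
    (hg : DifferentiableAt ℝ g x) (hfx : f x ≠ 0) (hgx : g x ≠ 0) :
    gradient (fun w => log (f w / g w)) x =
      gradient (fun w => log (f w)) x - gradient (fun w => log (g w)) x := by
  have hlog_div : (fun w => log (f w / g w)) =ᶠ[𝓝 x] fun w => log (f w) - log (g w) := by
    filter_upwards [hf.continuousAt.eventually_ne hfx, hg.continuousAt.eventually_ne hgx]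
      with w hfw hgw using log_div hfw hgw
  rw [hlog_div.gradient_eq, gradient, gradient, gradient,
    fderiv_fun_sub (hf.log hfx) (hg.log hgx), map_sub]

/-- **Reverse Kullback–Leibler f-GAN parametrization:** with `g(D) = −e^{−D}` and
`f^c(T) = −1 − ln(−T)`, the optimal discriminator as a function of the log density
ratio is `D̃(y) = y` (uniquely determined by `(f^c)'(g(D)) = e^y`), the coefficient
`𝒞 = r·g'(D̃(ln r))·D̃'(ln r)` equals `1`, and hence the optimal-generator condition
reduces to exact score matching `∇ ln p = ∇ ln p_d`. -/
theorem rkl_fgan_discriminator_and_coefficient :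
    (∀ y D : ℝ,
      deriv (fun T : ℝ => -1 - Real.log (-T)) ((fun d : ℝ => -Real.exp (-d)) D) =
          Real.exp y ↔ D = y) ∧
    (∀ r : ℝ, 0 < r →
      r * deriv (fun d : ℝ => -Real.exp (-d)) ((fun y : ℝ => y) (Real.log r)) *
          deriv (fun y : ℝ => y) (Real.log r) = 1) ∧
    (∀ (n : ℕ) (p pd : EuclideanSpace ℝ (Fin n) → ℝ),
      Differentiable ℝ p → Differentiable ℝ pd →
      (∀ x, 0 < p x) → (∀ x, 0 < pd x) →
      ∀ x : EuclideanSpace ℝ (Fin n),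
        (1 : ℝ) • gradient (fun w => Real.log (pd w / p w)) x = 0 →
          gradient (fun w => Real.log (p w)) x =
            gradient (fun w => Real.log (pd w)) x) := by
  refine ⟨fun y D => ?_, fun r hr => ?_, fun n p pd hp hpd hp0 hpd0 x hscore => ?_⟩
  · rw [deriv_neg_one_sub_log_neg_at_neg_exp_neg, exp_injective.eq_iff]
  · rw [(hasDerivAt_neg_exp_neg _).deriv, deriv_id'', exp_neg, exp_log hr, mul_one,
      mul_inv_cancel₀ hr.ne']
  · rw [one_smul, gradient_log_div (hpd x) (hp x) (hpd0 x).ne' (hp0 x).ne', sub_eq_zero] at hscore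
    exact hscore.symm
end
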